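/- arXiv:2208.02112 — 2 statements merged into one kernel-verified Lean document; each statement's English description precedes it below -/
import Mathlib

section
/- Let k ≥ 2 and let G be a k-dicritical digraph. Then every arc of G is contained in an induced directed cycle of G (a directed cycle with pairwise distinct vertices such that the subdigraph induced by its vertex set contains no arcs other than those of the cycle). -/
/-- A (simple) digraph: a finite vertex set (of naturals) together with a finite
set of arcs between distinct vertices. -/
structure FDigraph where
  verts : Finset ℕ
  arcs : Finset (ℕ × ℕ)
  wf : ∀ a ∈ arcs, a.1 ∈ verts ∧ a.2 ∈ verts ∧ a.1 ≠ a.2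

namespace FDigraph

/-- Smart constructor: keeps only the legal arcs. -/
def mk' (V : Finset ℕ) (A : Finset (ℕ × ℕ)) : FDigraph where
  verts := V
  arcs := A.filter fun a => a.1 ∈ V ∧ a.2 ∈ V ∧ a.1 ≠ a.2
  wf := by
    intro a ha
    simp only [Finset.mem_filter] at ha
    exact ha.2

/-- A directed cycle, given as its (nonempty, duplicate-free) list of vertices:
every cyclically consecutive pair is an arc. -/
def IsDicycle (G : FDigraph) (l : List ℕ) : Prop :=
  l ≠ [] ∧ l.Nodup ∧ ∀ p ∈ l.zip (l.rotate 1), p ∈ G.arcs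

/-- A set of vertices is acyclic if it contains no directed cycle. -/
def AcyclicOn (G : FDigraph) (S : Set ℕ) : Prop :=
  ¬ ∃ l, G.IsDicycle l ∧ ∀ v ∈ l, v ∈ S

/-- A `k`-dicolouring: colours `0, …, k-1`, every colour class acyclic. -/
def IsDicolouring (G : FDigraph) (k : ℕ) (φ : ℕ → ℕ) : Prop :=
  (∀ v ∈ G.verts, φ v < k) ∧ ∀ c, G.AcyclicOn {v | φ v = c}

/-- The dichromatic number. -/
noncomputable def dichi (G : FDigraph) : ℕ := sInf {k | ∃ φ, G.IsDicolouring k φ}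

/-- Subdigraph relation. -/
def Subdigraph (H G : FDigraph) : Prop := H.verts ⊆ G.verts ∧ H.arcs ⊆ G.arcs

/-- `G` is `k`-dicritical. -/
def Dicritical (G : FDigraph) (k : ℕ) : Prop :=
  G.dichi = k ∧ ∀ H, Subdigraph H G → H ≠ G → H.dichi ≤ k - 1

/-- Induced subdigraph on a finite set of vertices. -/
def induce (G : FDigraph) (S : Finset ℕ) : FDigraph := mk' (G.verts ∩ S) G.arcs

def outDeg (G : FDigraph) (v : ℕ) : ℕ := (G.arcs.filter fun a => a.1 = v).card
def inDeg (G : FDigraph) (v : ℕ) : ℕ := (G.arcs.filter fun a => a.2 = v).card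
def deg (G : FDigraph) (v : ℕ) : ℕ := G.outDeg v + G.inDeg v

/-- Weak adjacency: an arc in either direction. -/
def wadj (G : FDigraph) (u v : ℕ) : Prop := (u, v) ∈ G.arcs ∨ (v, u) ∈ G.arcs

/-- Weak reachability. -/
def WReach (G : FDigraph) : ℕ → ℕ → Prop := Relation.ReflTransGen G.wadj

/-- A digraph is connected when its underlying graph is connected
(the empty digraph counts as connected). -/
def Connected (G : FDigraph) : Prop := ∀ u ∈ G.verts, ∀ v ∈ G.verts, G.WReach u v

/-- The set of connected components. -/
def components (G : FDigraph) : Set (Set ℕ) :=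
  {C | ∃ v ∈ G.verts, C = {u | u ∈ G.verts ∧ G.WReach v u}}

/-- The number of connected components. -/
noncomputable def numComponents (G : FDigraph) : ℕ := G.components.ncard

/-- Isomorphism of digraphs. -/
def Iso (G H : FDigraph) : Prop :=
  ∃ f : ℕ → ℕ, Set.BijOn f ↑G.verts ↑H.verts ∧
    ∀ u ∈ G.verts, ∀ v ∈ G.verts, ((u, v) ∈ G.arcs ↔ (f u, f v) ∈ H.arcs)

/-- The bidirected (complete) digraph `↔K_n`. -/
def completeD (n : ℕ) : FDigraph := mk' (Finset.range n) (Finset.range n ×ˢ Finset.range n)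

/-- The directed cycle `C⃗_n`. -/
def dirCycle (n : ℕ) : FDigraph :=
  mk' (Finset.range n)
    ((Finset.range n ×ˢ Finset.range n).filter fun a => a.2 = (a.1 + 1) % n)

/-- The bidirected cycle `↔C_n`. -/
def biCycle (n : ℕ) : FDigraph :=
  mk' (Finset.range n)
    ((Finset.range n ×ˢ Finset.range n).filter fun a =>
      a.2 = (a.1 + 1) % n ∨ a.1 = (a.2 + 1) % n)

/-- The Dirac join of `↔K_{k-2}` (on `{0,…,k-3}`) and the directed triangle
`C⃗_3` (on `{k-2, k-1, k}`). -/
def diracJoinExample (k : ℕ) : FDigraph :=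
  mk' (Finset.range (k + 1))
    ((Finset.range (k + 1) ×ˢ Finset.range (k + 1)).filter fun a =>
      a.1 < k - 2 ∨ a.2 < k - 2 ∨ a.2 = (if a.1 = k then k - 2 else a.1 + 1))

end FDigraph

/-!
Fix an arc `a`. By criticality `G - a` has a `(k-1)`-dicolouring `φ`; it is not a dicolouring of
`G`, so some colour class of `φ` contains a dicycle of `G`, and every such dicycle uses `a`.
A shortest dicycle in that colour class is induced: a chord `(u, v)` followed by the cycle path
from `v` back to `u` would be a shorter one.
-/

theorem List.zip_rotate_rotate_one {α : Type*} (l : List α) (n : ℕ) :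
    (l.rotate n).zip ((l.rotate n).rotate 1) = (l.zip (l.rotate 1)).rotate n := by
  rw [List.rotate_rotate, add_comm, ← List.rotate_rotate, List.zip_eq_zipWith,
    List.zip_eq_zipWith, List.zipWith_rotate_distrib _ _ _ _ (List.length_rotate l 1).symm]

theorem List.zip_cons_append_rotate_one {α : Type*} (v u : α) (t₁ t₂ : List α) :
    (v :: (t₁ ++ u :: t₂)).zip ((v :: (t₁ ++ u :: t₂)).rotate 1) =
      (v :: t₁).zip (t₁ ++ [u]) ++ (u :: t₂).zip (t₂ ++ [v]) := by
  rw [List.rotate_cons_succ, List.rotate_zero, ← List.cons_append,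
    show t₁ ++ u :: t₂ ++ [v] = (t₁ ++ [u]) ++ (t₂ ++ [v]) by simp,
    List.zip_append (by simp)]

namespace FDigraph

variable {G : FDigraph}

def IsInducedDicycle (G : FDigraph) (l : List ℕ) : Prop :=
  G.IsDicycle l ∧ ∀ u ∈ l, ∀ v ∈ l, (u, v) ∈ G.arcs → (u, v) ∈ l.zip (l.rotate 1)

theorem IsDicycle.exists_ne {l : List ℕ} (hl : G.IsDicycle l) : ∃ u ∈ l, ∃ v ∈ l, u ≠ v := by
  obtain ⟨p, hp⟩ := List.exists_mem_of_ne_nil _ (by simpa using hl.1 : l.zip (l.rotate 1) ≠ [])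
  exact ⟨p.1, (List.of_mem_zip hp).1, p.2, List.mem_rotate.1 (List.of_mem_zip hp).2,
    (G.wf p (hl.2.2 p hp)).2.2⟩

theorem IsDicycle.rotate {l : List ℕ} (hl : G.IsDicycle l) (n : ℕ) :
    G.IsDicycle (l.rotate n) := by
  refine ⟨by simpa using hl.1, List.nodup_rotate.2 hl.2.1, fun p hp => hl.2.2 p ?_⟩
  rwa [List.zip_rotate_rotate_one, List.mem_rotate] at hp

theorem IsDicycle.shortcut {v u : ℕ} {t₁ t₂ : List ℕ} (hl : G.IsDicycle (v :: (t₁ ++ u :: t₂)))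
    (huv : (u, v) ∈ G.arcs) : G.IsDicycle (v :: (t₁ ++ [u])) := by
  have hsub : List.Sublist (v :: (t₁ ++ [u])) (v :: (t₁ ++ u :: t₂)) := by simp
  refine ⟨List.cons_ne_nil _ _, hl.2.1.sublist hsub, fun p hp => ?_⟩
  rw [List.zip_cons_append_rotate_one v u t₁ []] at hp
  rcases List.mem_append.1 hp with hp | hp
  · exact hl.2.2 p (by rw [List.zip_cons_append_rotate_one]; exact List.mem_append_left _ hp)
  · simp only [List.nil_append, List.zip_cons_cons, List.zip_nil_left, List.mem_singleton] at hp
    exact hp ▸ huv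

theorem IsDicycle.exists_shorter_of_chord {l : List ℕ} (hl : G.IsDicycle l) {u v : ℕ}
    (hu : u ∈ l) (hv : v ∈ l) (huv : (u, v) ∈ G.arcs) (hchord : (u, v) ∉ l.zip (l.rotate 1)) :
    ∃ l', G.IsDicycle l' ∧ l'.length < l.length ∧ ∀ w ∈ l', w ∈ l := by
  obtain ⟨s, r, rfl⟩ := List.append_of_mem hv
  have hrot : (s ++ v :: r).rotate s.length = v :: (r ++ s) := by
    simp [List.rotate_append_length_eq]
  have hu' : u ∈ r ++ s := by
    have : u ∈ v :: (r ++ s) := hrot ▸ List.mem_rotate.2 hu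
    exact (List.mem_cons.1 this).resolve_left (G.wf _ huv).2.2
  obtain ⟨t₁, t₂, hsplit⟩ := List.append_of_mem hu'
  have hcyc : G.IsDicycle (v :: (t₁ ++ u :: t₂)) := hsplit ▸ hrot ▸ hl.rotate s.length
  have hchord' : (u, v) ∉ (v :: (t₁ ++ u :: t₂)).zip ((v :: (t₁ ++ u :: t₂)).rotate 1) := by
    rwa [← hsplit, ← hrot, List.zip_rotate_rotate_one, List.mem_rotate]
  have ht₂ : t₂ ≠ [] := by
    rintro rfl
    exact hchord' (by rw [List.zip_cons_append_rotate_one]; simp)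
  have hlen : (s ++ v :: r).length = t₁.length + t₂.length + 2 := by
    have := congrArg List.length hsplit
    simp only [List.length_append, List.length_cons] at this ⊢
    omega
  refine ⟨v :: (t₁ ++ [u]), hcyc.shortcut huv, ?_, fun w hw => ?_⟩
  · have := List.length_pos_iff.2 ht₂
    simp only [hlen, List.length_cons, List.length_append, List.length_nil]
    omega
  · rw [← List.mem_rotate (n := s.length), hrot, hsplit]
    simp only [List.mem_cons, List.mem_append] at hw ⊢
    tauto

theorem exists_isInducedDicycle_of_not_acyclicOn {S : Set ℕ} (h : ¬ G.AcyclicOn S) :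
    ∃ l, G.IsInducedDicycle l ∧ ∀ v ∈ l, v ∈ S := by
  rw [AcyclicOn, not_not] at h
  obtain ⟨l, ⟨hl, hlS⟩, hmin⟩ := (measure List.length).wf.has_min _ h
  refine ⟨l, ⟨hl, fun u hu v hv huv => ?_⟩, hlS⟩
  by_contra hchord
  obtain ⟨l', hl', hlt, hsub⟩ := hl.exists_shorter_of_chord hu hv huv hchord
  exact hmin l' ⟨hl', fun w hw => hlS w (hsub w hw)⟩ hlt

theorem exists_isDicolouring (G : FDigraph) : ∃ m φ, G.IsDicolouring m φ := by
  refine ⟨G.verts.sup id + 1, id, fun v hv => Nat.lt_succ_of_le (Finset.le_sup (f := id) hv),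
    fun c => ?_⟩
  rintro ⟨l, hl, hlc⟩
  obtain ⟨u, hu, v, hv, huv⟩ := hl.exists_ne
  exact huv ((hlc u hu).trans (hlc v hv).symm)

theorem exists_isDicolouring_dichi (G : FDigraph) : ∃ φ, G.IsDicolouring G.dichi φ :=
  Nat.sInf_mem G.exists_isDicolouring

theorem IsDicolouring.mono {m m' : ℕ} {φ : ℕ → ℕ} (h : G.IsDicolouring m φ) (hm : m ≤ m') :
    G.IsDicolouring m' φ :=
  ⟨fun v hv => (h.1 v hv).trans_le hm, h.2⟩

theorem not_isDicolouring_of_lt_dichi {m : ℕ} (hm : m < G.dichi) (φ : ℕ → ℕ) :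
    ¬ G.IsDicolouring m φ :=
  fun h => (Nat.sInf_le (show m ∈ {k | ∃ φ, G.IsDicolouring k φ} from ⟨φ, h⟩)).not_gt hm

def deleteArc (G : FDigraph) (a : ℕ × ℕ) : FDigraph :=
  ⟨G.verts, G.arcs.erase a, fun b hb => G.wf b (Finset.mem_of_mem_erase hb)⟩

theorem deleteArc_subdigraph (a : ℕ × ℕ) : Subdigraph (G.deleteArc a) G :=
  ⟨subset_rfl, Finset.erase_subset _ _⟩

theorem deleteArc_ne {a : ℕ × ℕ} (ha : a ∈ G.arcs) : G.deleteArc a ≠ G := by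
  intro h
  have harcs : G.arcs.erase a = G.arcs := congrArg arcs h
  exact Finset.notMem_erase a G.arcs (by rw [harcs]; exact ha)

theorem IsDicycle.deleteArc {l : List ℕ} (hl : G.IsDicycle l) {a : ℕ × ℕ}
    (ha : a ∉ l.zip (l.rotate 1)) : (G.deleteArc a).IsDicycle l :=
  ⟨hl.1, hl.2.1, fun p hp => Finset.mem_erase.2 ⟨fun h => ha (h ▸ hp), hl.2.2 p hp⟩⟩

theorem Dicritical.exists_isDicolouring_deleteArc {k : ℕ} (hG : G.Dicritical k) {a : ℕ × ℕ}
    (ha : a ∈ G.arcs) : ∃ φ, (G.deleteArc a).IsDicolouring (k - 1) φ := by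
  obtain ⟨φ, hφ⟩ := (G.deleteArc a).exists_isDicolouring_dichi
  exact ⟨φ, hφ.mono (hG.2 _ (deleteArc_subdigraph a) (deleteArc_ne ha))⟩

end FDigraph

/-- every arc of a `k`-dicritical digraph lies on an induced
directed cycle. -/
theorem arc_in_induced_cycle (k : ℕ) (hk : 2 ≤ k) (G : FDigraph)
    (hG : G.Dicritical k) :
    ∀ a ∈ G.arcs, ∃ l : List ℕ, G.IsDicycle l ∧ a ∈ l.zip (l.rotate 1) ∧
      ∀ u ∈ l, ∀ v ∈ l, (u, v) ∈ G.arcs → (u, v) ∈ l.zip (l.rotate 1) := by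
  intro a ha
  obtain ⟨φ, hφ⟩ := hG.exists_isDicolouring_deleteArc ha
  have hφG : ¬ G.IsDicolouring (k - 1) φ :=
    G.not_isDicolouring_of_lt_dichi (by rw [hG.1]; omega) φ
  obtain ⟨c, hc⟩ : ∃ c, ¬ G.AcyclicOn {v | φ v = c} := by
    by_contra! h
    exact hφG ⟨hφ.1, h⟩
  obtain ⟨l, ⟨hl, hind⟩, hlc⟩ := G.exists_isInducedDicycle_of_not_acyclicOn hc
  refine ⟨l, hl, ?_, hind⟩
  by_contra hal
  exact hφ.2 c ⟨l, hl.deleteArc hal, hlc⟩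
end

section
/- Let G be a connected digraph, X ⊆ V(G) with G[X] connected, and L a list assignment of G such that G − X is L-dicolourable, G is not L-dicolourable and |L(x)| ≥ d_max(x) for every x ∈ X. Then for every x ∈ X: (1) |L(x)| = d^+(x) = d^−(x); (2) G − x is L-dicolourable; (3) for every L-dicolouring φ of G − x, every colour of L(x) appears both on some out-neighbour and on some in-neighbour of x; (4) for every L-dicolouring φ of G − x and every vertex y ∈ X adjacent to x, the map ψ defined on V(G) − {y} by ψ(x) = φ(y) and ψ(v) = φ(v) for v ∉ {x,y} is an L-dicolouring of G − y. -/
namespace FDigraph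

/-- An `L`-dicolouring for a list assignment `L`. -/
def IsLDicolouring (G : FDigraph) (L : ℕ → Finset ℕ) (φ : ℕ → ℕ) : Prop :=
  (∀ v ∈ G.verts, φ v ∈ L v) ∧ ∀ c, G.AcyclicOn {v | φ v = c}

/-- `G` is `L`-dicolourable. -/
def LDicolourable (G : FDigraph) (L : ℕ → Finset ℕ) : Prop := ∃ φ, G.IsLDicolouring L φ

end FDigraph

section Helpers

namespace FDigraph

lemma mem_zip_iff {l : List ℕ} {p : ℕ × ℕ} :
    p ∈ l.zip (l.rotate 1) ↔
      ∃ i : ℕ, ∃ h : i < l.length,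
        p = (l[i], l[(i + 1) % l.length]'(Nat.mod_lt _ (by omega))) := by
  have hlen : (l.rotate 1).length = l.length := l.length_rotate 1
  constructor
  · intro hp
    rw [List.mem_iff_getElem] at hp
    obtain ⟨i, hi, hget⟩ := hp
    have hi' : i < l.length := by
      rw [List.length_zip, hlen] at hi; omega
    refine ⟨i, hi', ?_⟩
    rw [List.getElem_zip] at hget
    rw [← hget]
    congr 1
    rw [List.getElem_rotate]
  · rintro ⟨i, h, rfl⟩
    rw [List.mem_iff_getElem]
    refine ⟨i, by rw [List.length_zip, hlen]; omega, ?_⟩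
    rw [List.getElem_zip, List.getElem_rotate]

lemma dicycle_arcs {G : FDigraph} {l : List ℕ} (hl : G.IsDicycle l) {x : ℕ} (hx : x ∈ l) :
    ∃ v ∈ l, ∃ u ∈ l, v ≠ x ∧ u ≠ x ∧ (x, v) ∈ G.arcs ∧ (u, x) ∈ G.arcs := by
  obtain ⟨-, -, harcs⟩ := hl
  rw [List.mem_iff_getElem] at hx
  obtain ⟨i, hi, rfl⟩ := hx
  have hn : 0 < l.length := by omega
  have hs : (l[i], l[(i + 1) % l.length]'(Nat.mod_lt _ hn)) ∈ G.arcs := by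
    apply harcs; rw [mem_zip_iff]; exact ⟨i, hi, rfl⟩
  have hjlt : (i + (l.length - 1)) % l.length < l.length := Nat.mod_lt _ hn
  have hji : ((i + (l.length - 1)) % l.length + 1) % l.length = i := by
    rw [Nat.mod_add_mod]
    have h1 : i + (l.length - 1) + 1 = i + l.length := by omega
    rw [h1, Nat.add_mod_right, Nat.mod_eq_of_lt hi]
  have hp : (l[(i + (l.length - 1)) % l.length],
      l[((i + (l.length - 1)) % l.length + 1) % l.length]'(Nat.mod_lt _ hn)) ∈ G.arcs := by
    apply harcs; rw [mem_zip_iff]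
    exact ⟨(i + (l.length - 1)) % l.length, hjlt, rfl⟩
  simp only [hji] at hp
  refine ⟨l[(i + 1) % l.length]'(Nat.mod_lt _ hn), List.getElem_mem _,
    l[(i + (l.length - 1)) % l.length]'hjlt, List.getElem_mem _, ?_, ?_, hs, hp⟩
  · exact Ne.symm (G.wf _ hs).2.2
  · exact (G.wf _ hp).2.2

lemma dicycle_vert_mem {H : FDigraph} {l : List ℕ} (hl : H.IsDicycle l) {v : ℕ} (hv : v ∈ l) :
    v ∈ H.verts := by
  obtain ⟨w, -, u, -, -, -, harc, -⟩ := dicycle_arcs hl hv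
  exact (H.wf _ harc).1

lemma induce_verts' (G : FDigraph) (S : Finset ℕ) : (G.induce S).verts = G.verts ∩ S := rfl

lemma induce_arcs_subset (G : FDigraph) (S : Finset ℕ) : (G.induce S).arcs ⊆ G.arcs :=
  Finset.filter_subset _ _

lemma mem_induce_arcs {G : FDigraph} {S : Finset ℕ} {a : ℕ × ℕ} :
    a ∈ (G.induce S).arcs ↔
      a ∈ G.arcs ∧ a.1 ∈ G.verts ∩ S ∧ a.2 ∈ G.verts ∩ S ∧ a.1 ≠ a.2 := by
  simp [induce, mk', Finset.mem_filter]

lemma dicycle_of_induce {G : FDigraph} {S : Finset ℕ} {l : List ℕ}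
    (hl : (G.induce S).IsDicycle l) : G.IsDicycle l ∧ ∀ v ∈ l, v ∈ S := by
  refine ⟨⟨hl.1, hl.2.1, fun p hp => induce_arcs_subset G S (hl.2.2 p hp)⟩, ?_⟩
  intro v hv
  have h := dicycle_vert_mem hl hv
  rw [induce_verts', Finset.mem_inter] at h
  exact h.2

lemma dicycle_induce {G : FDigraph} {S : Finset ℕ} {l : List ℕ}
    (hl : G.IsDicycle l) (hS : ∀ v ∈ l, v ∈ S) : (G.induce S).IsDicycle l := by
  refine ⟨hl.1, hl.2.1, fun p hp => ?_⟩
  have harc := hl.2.2 p hp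
  have hmem : p.1 ∈ l ∧ p.2 ∈ l := by
    rw [mem_zip_iff] at hp
    obtain ⟨i, h, rfl⟩ := hp
    exact ⟨List.getElem_mem _, List.getElem_mem _⟩
  obtain ⟨h1, h2, hne⟩ := G.wf p harc
  rw [mem_induce_arcs]
  exact ⟨harc, Finset.mem_inter.mpr ⟨h1, hS _ hmem.1⟩,
    Finset.mem_inter.mpr ⟨h2, hS _ hmem.2⟩, hne⟩

lemma induce_self (G : FDigraph) : G.induce G.verts = G := by
  cases G with
  | mk V A wf =>
    simp only [induce, mk', Finset.inter_self, mk.injEq]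
    refine ⟨trivial, Finset.filter_true_of_mem wf⟩

/-- The key extension lemma: if `φ` colours `G - Y'`, `y ∈ Y'`, `c ∈ L y`, and it is not
the case that `c` appears both on a coloured out-neighbour and a coloured in-neighbour of
`y`, then assigning `c` to `y` colours `G - (Y' \ {y})`. -/
lemma extend_colouring (G : FDigraph) (L : ℕ → Finset ℕ) (Y' : Finset ℕ) {y : ℕ}
    (hy : y ∈ Y') {φ : ℕ → ℕ} (hφ : (G.induce (G.verts \ Y')).IsLDicolouring L φ)
    {c : ℕ} (hc : c ∈ L y)
    (hnF : ¬ ((∃ v, (y, v) ∈ G.arcs ∧ v ∉ Y' ∧ φ v = c) ∧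
              (∃ u, (u, y) ∈ G.arcs ∧ u ∉ Y' ∧ φ u = c))) :
    (G.induce (G.verts \ Y'.erase y)).IsLDicolouring L (Function.update φ y c) := by
  obtain ⟨hmem, hacyc⟩ := hφ
  constructor
  · intro v hv
    simp only [induce_verts', Finset.mem_inter, Finset.mem_sdiff] at hv
    by_cases hvy : v = y
    · subst hvy; rw [Function.update_self]; exact hc
    · rw [Function.update_of_ne hvy]
      apply hmem
      simp only [induce_verts', Finset.mem_inter, Finset.mem_sdiff]
      have hvY : v ∉ Y' := fun h => hv.2.2 (Finset.mem_erase.mpr ⟨hvy, h⟩)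
      exact ⟨hv.1, hv.1, hvY⟩
  · rintro c' ⟨l, hl, hlc⟩
    obtain ⟨hlG, hlS⟩ := dicycle_of_induce hl
    by_cases hyl : y ∈ l
    · have hc' : c' = c := by
        have h := hlc y hyl
        rw [Set.mem_setOf_eq, Function.update_self] at h
        exact h.symm
      obtain ⟨v, hvl, u, hul, hvy, huy, harv, haru⟩ := dicycle_arcs hlG hyl
      apply hnF
      have hvY : v ∉ Y' := by
        have h := hlS v hvl
        rw [Finset.mem_sdiff] at h
        exact fun hh => h.2 (Finset.mem_erase.mpr ⟨hvy, hh⟩)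
      have huY : u ∉ Y' := by
        have h := hlS u hul
        rw [Finset.mem_sdiff] at h
        exact fun hh => h.2 (Finset.mem_erase.mpr ⟨huy, hh⟩)
      have hφv : φ v = c := by
        have h := hlc v hvl
        rw [Set.mem_setOf_eq, Function.update_of_ne hvy] at h
        rw [h, hc']
      have hφu : φ u = c := by
        have h := hlc u hul
        rw [Set.mem_setOf_eq, Function.update_of_ne huy] at h
        rw [h, hc']
      exact ⟨⟨v, harv, hvY, hφv⟩, ⟨u, haru, huY, hφu⟩⟩
    · apply hacyc c'
      refine ⟨l, dicycle_induce hlG ?_, ?_⟩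
      · intro v hv
        have h1 := hlS v hv
        have hvy : v ≠ y := fun h => hyl (h ▸ hv)
        rw [Finset.mem_sdiff] at h1 ⊢
        exact ⟨h1.1, fun h => h1.2 (Finset.mem_erase.mpr ⟨hvy, h⟩)⟩
      · intro v hv
        have h := hlc v hv
        have hvy : v ≠ y := fun hh => hyl (hh ▸ hv)
        rw [Set.mem_setOf_eq, Function.update_of_ne hvy] at h
        exact h

/-- `n`-step reachability for a relation. -/
def reachN (r : ℕ → ℕ → Prop) : ℕ → ℕ → ℕ → Prop
  | 0, a, b => a = b
  | n + 1, a, b => ∃ w, reachN r n a w ∧ r w b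

lemma reachN_zero {r : ℕ → ℕ → Prop} {a b : ℕ} : reachN r 0 a b ↔ a = b := Iff.rfl

lemma reachN_succ {r : ℕ → ℕ → Prop} {n : ℕ} {a b : ℕ} :
    reachN r (n + 1) a b ↔ ∃ w, reachN r n a w ∧ r w b := Iff.rfl

lemma reachN_of_reflTransGen {r : ℕ → ℕ → Prop} {a b : ℕ}
    (h : Relation.ReflTransGen r a b) : ∃ n, reachN r n a b := by
  induction h with
  | refl => exact ⟨0, rfl⟩
  | tail _ hbc ih =>
    obtain ⟨n, hn⟩ := ih
    exact ⟨n + 1, reachN_succ.mpr ⟨_, hn, hbc⟩⟩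

/-- Greedy colouring of `X - {x}` from far to near: `G - x` is `L`-dicolourable. -/
lemma erase_colourable (G : FDigraph) (X : Finset ℕ) (hXsub : X ⊆ G.verts)
    (hXconn : (G.induce X).Connected) (L : ℕ → Finset ℕ)
    (hcol : (G.induce (G.verts \ X)).LDicolourable L)
    (hlist : ∀ x ∈ X, max (G.outDeg x) (G.inDeg x) ≤ (L x).card)
    {x : ℕ} (hx : x ∈ X) :
    (G.induce (G.verts \ {x})).LDicolourable L := by
  classical
  set r : ℕ → ℕ → Prop := (G.induce X).wadj with hr
  have hXverts : (G.induce X).verts = X := by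
    rw [induce_verts']; exact Finset.inter_eq_right.mpr hXsub
  have hreach : ∀ u ∈ X, ∃ n, reachN r n x u := by
    intro u hu
    exact reachN_of_reflTransGen
      (hXconn x (by rw [hXverts]; exact hx) u (by rw [hXverts]; exact hu))
  set d : ℕ → ℕ := fun u => if h : ∃ n, reachN r n x u then Nat.find h else 0 with hd
  have hdspec : ∀ u ∈ X, reachN r (d u) x u := by
    intro u hu
    rw [hd]; dsimp only
    rw [dif_pos (hreach u hu)]
    exact Nat.find_spec (hreach u hu)
  have hdmin : ∀ u, (∃ n, reachN r n x u) → ∀ m, reachN r m x u → d u ≤ m := by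
    intro u h m hm
    rw [hd]; dsimp only; rw [dif_pos h]
    exact Nat.find_min' h hm
  have key : ∀ k : ℕ, ∀ Y : Finset ℕ, x ∈ Y → Y ⊆ X →
      (∀ u ∈ X, ∀ z ∈ Y, d u < d z → u ∈ Y) → (X \ Y).card ≤ k →
      (G.induce (G.verts \ Y)).LDicolourable L := by
    intro k
    induction k with
    | zero =>
      intro Y hxY hYX hDC hcard
      have hXeq : X = Y := by
        apply Finset.Subset.antisymm _ hYX
        intro u hu
        by_contra h
        have h1 : u ∈ X \ Y := Finset.mem_sdiff.mpr ⟨hu, h⟩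
        have h2 := Finset.card_pos.mpr ⟨u, h1⟩
        omega
      rw [← hXeq]; exact hcol
    | succ k ih =>
      intro Y hxY hYX hDC hcard
      by_cases hXY : X ⊆ Y
      · have hXeq : X = Y := Finset.Subset.antisymm hXY hYX
        rw [← hXeq]; exact hcol
      · have hne : (X \ Y).Nonempty := by
          rw [Finset.sdiff_nonempty]; exact hXY
        obtain ⟨y, hyXY, hymin⟩ := Finset.exists_min_image (X \ Y) d hne
        rw [Finset.mem_sdiff] at hyXY
        obtain ⟨hyX, hyY⟩ := hyXY
        have hxY' : x ∈ insert y Y := Finset.mem_insert_of_mem hxY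
        have hY'X : insert y Y ⊆ X := Finset.insert_subset hyX hYX
        have hDC' : ∀ u ∈ X, ∀ z ∈ insert y Y, d u < d z → u ∈ insert y Y := by
          intro u hu z hz hlt
          rcases Finset.mem_insert.mp hz with hz | hz
          · subst hz
            by_cases huY : u ∈ Y
            · exact Finset.mem_insert_of_mem huY
            · exfalso
              have := hymin u (Finset.mem_sdiff.mpr ⟨hu, huY⟩)
              omega
          · exact Finset.mem_insert_of_mem (hDC u hu z hz hlt)
        have hcard' : (X \ insert y Y).card ≤ k := by
          rw [Finset.sdiff_insert]
          rw [Finset.card_erase_of_mem (Finset.mem_sdiff.mpr ⟨hyX, hyY⟩)]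
          have hpos : 0 < (X \ Y).card := Finset.card_pos.mpr hne
          omega
        obtain ⟨φ, hφ⟩ := ih (insert y Y) hxY' hY'X hDC' hcard'
        have hyx : y ≠ x := fun h => hyY (h ▸ hxY)
        have hdy : d y ≠ 0 := by
          intro h0
          have h1 := hdspec y hyX
          rw [h0] at h1
          have h2 : x = y := h1
          exact hyx h2.symm
        obtain ⟨m, hm⟩ : ∃ m, d y = m + 1 := ⟨d y - 1, by omega⟩
        have hstep := hdspec y hyX
        rw [hm] at hstep
        obtain ⟨w, hwm, hrwy⟩ := reachN_succ.mp hstep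
        have hdw : d w ≤ m := hdmin w ⟨m, hwm⟩ m hwm
        have hwadj : (w, y) ∈ (G.induce X).arcs ∨ (y, w) ∈ (G.induce X).arcs := hrwy
        have hwX : w ∈ X := by
          rcases hwadj with h | h
          · have h1 := ((G.induce X).wf _ h).1; rw [hXverts] at h1; exact h1
          · have h1 := ((G.induce X).wf _ h).2.1; rw [hXverts] at h1; exact h1
        have hwY' : w ∈ insert y Y := hDC' w hwX y (Finset.mem_insert_self y Y) (by omega)
        have hwadjG : (w, y) ∈ G.arcs ∨ (y, w) ∈ G.arcs := by
          rcases hwadj with h | h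
          · exact Or.inl (induce_arcs_subset G X h)
          · exact Or.inr (induce_arcs_subset G X h)
        set F := (L y).filter (fun c => (∃ v, (y, v) ∈ G.arcs ∧ v ∉ insert y Y ∧ φ v = c) ∧
              (∃ u, (u, y) ∈ G.arcs ∧ u ∉ insert y Y ∧ φ u = c)) with hF
        have hFcard : F.card < (L y).card := by
          have hly : G.inDeg y ≤ (L y).card ∧ G.outDeg y ≤ (L y).card :=
            ⟨le_trans (le_max_right _ _) (hlist y hyX),
             le_trans (le_max_left _ _) (hlist y hyX)⟩
          rcases hwadjG with harc | harc
          · have hsub : F ⊆ ((G.arcs.filter fun a => a.2 = y ∧ a.1 ∉ insert y Y).image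
                fun a => φ a.1) := by
              intro c hcF
              rw [hF, Finset.mem_filter] at hcF
              obtain ⟨-, -, u, hu1, hu2, hu3⟩ := hcF
              exact Finset.mem_image.mpr ⟨(u, y), Finset.mem_filter.mpr ⟨hu1, rfl, hu2⟩, hu3⟩
            have h2 : (G.arcs.filter fun a => a.2 = y ∧ a.1 ∉ insert y Y) ⊆
                (G.arcs.filter fun a => a.2 = y).erase (w, y) := by
              intro a ha
              rw [Finset.mem_filter] at ha
              refine Finset.mem_erase.mpr ⟨?_, Finset.mem_filter.mpr ⟨ha.1, ha.2.1⟩⟩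
              intro h; rw [h] at ha; exact ha.2.2 hwY'
            have hmemwy : (w, y) ∈ G.arcs.filter fun a => a.2 = y :=
              Finset.mem_filter.mpr ⟨harc, rfl⟩
            have c1 := Finset.card_le_card hsub
            have c2 : ((G.arcs.filter fun a => a.2 = y ∧ a.1 ∉ insert y Y).image
                fun a => φ a.1).card ≤
                (G.arcs.filter fun a => a.2 = y ∧ a.1 ∉ insert y Y).card :=
              Finset.card_image_le
            have c3 := Finset.card_le_card h2
            have c4 := Finset.card_erase_of_mem hmemwy
            have c5 : 0 < (G.arcs.filter fun a => a.2 = y).card :=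
              Finset.card_pos.mpr ⟨_, hmemwy⟩
            have c6 : (G.arcs.filter fun a => a.2 = y).card = G.inDeg y := rfl
            omega
          · have hsub : F ⊆ ((G.arcs.filter fun a => a.1 = y ∧ a.2 ∉ insert y Y).image
                fun a => φ a.2) := by
              intro c hcF
              rw [hF, Finset.mem_filter] at hcF
              obtain ⟨-, ⟨v, hv1, hv2, hv3⟩, -⟩ := hcF
              exact Finset.mem_image.mpr ⟨(y, v), Finset.mem_filter.mpr ⟨hv1, rfl, hv2⟩, hv3⟩
            have h2 : (G.arcs.filter fun a => a.1 = y ∧ a.2 ∉ insert y Y) ⊆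
                (G.arcs.filter fun a => a.1 = y).erase (y, w) := by
              intro a ha
              rw [Finset.mem_filter] at ha
              refine Finset.mem_erase.mpr ⟨?_, Finset.mem_filter.mpr ⟨ha.1, ha.2.1⟩⟩
              intro h; rw [h] at ha; exact ha.2.2 hwY'
            have hmemwy : (y, w) ∈ G.arcs.filter fun a => a.1 = y :=
              Finset.mem_filter.mpr ⟨harc, rfl⟩
            have c1 := Finset.card_le_card hsub
            have c2 : ((G.arcs.filter fun a => a.1 = y ∧ a.2 ∉ insert y Y).image
                fun a => φ a.2).card ≤
                (G.arcs.filter fun a => a.1 = y ∧ a.2 ∉ insert y Y).card :=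
              Finset.card_image_le
            have c3 := Finset.card_le_card h2
            have c4 := Finset.card_erase_of_mem hmemwy
            have c5 : 0 < (G.arcs.filter fun a => a.1 = y).card :=
              Finset.card_pos.mpr ⟨_, hmemwy⟩
            have c6 : (G.arcs.filter fun a => a.1 = y).card = G.outDeg y := rfl
            omega
        have hcex : ∃ c ∈ L y, c ∉ F := by
          by_contra h
          push_neg at h
          have h1 : L y ⊆ F := h
          have h2 := Finset.card_le_card h1
          omega
        obtain ⟨c, hcL, hcF⟩ := hcex
        have hnF : ¬ ((∃ v, (y, v) ∈ G.arcs ∧ v ∉ insert y Y ∧ φ v = c) ∧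
              (∃ u, (u, y) ∈ G.arcs ∧ u ∉ insert y Y ∧ φ u = c)) := by
          intro hboth
          exact hcF (by rw [hF]; exact Finset.mem_filter.mpr ⟨hcL, hboth⟩)
        have hext := extend_colouring G L (insert y Y) (Finset.mem_insert_self y Y)
          hφ hcL hnF
        rw [Finset.erase_insert hyY] at hext
        exact ⟨_, hext⟩
  have hdx : d x = 0 := by
    have h0 : reachN r 0 x x := rfl
    have h1 := hdmin x ⟨0, h0⟩ 0 h0
    omega
  exact key (X \ {x}).card {x} (Finset.mem_singleton_self x)
    (Finset.singleton_subset_iff.mpr hx)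
    (by
      intro u hu z hz hlt
      rw [Finset.mem_singleton] at hz
      subst hz
      rw [hdx] at hlt
      omega)
    le_rfl

/-- Statement (3): every colour appears on an out- and an in-neighbour. -/
lemma part3 (G : FDigraph) (L : ℕ → Finset ℕ) (hncol : ¬ G.LDicolourable L) (x : ℕ) :
    ∀ φ : ℕ → ℕ, (G.induce (G.verts.erase x)).IsLDicolouring L φ →
      ∀ c ∈ L x, (∃ v, (x, v) ∈ G.arcs ∧ φ v = c) ∧ (∃ v, (v, x) ∈ G.arcs ∧ φ v = c) := by
  intro φ hφ c hc
  by_contra h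
  have hφ' : (G.induce (G.verts \ ({x} : Finset ℕ))).IsLDicolouring L φ := by
    rw [← Finset.erase_eq]; exact hφ
  have hnF : ¬ ((∃ v, (x, v) ∈ G.arcs ∧ v ∉ ({x} : Finset ℕ) ∧ φ v = c) ∧
              (∃ u, (u, x) ∈ G.arcs ∧ u ∉ ({x} : Finset ℕ) ∧ φ u = c)) := by
    rintro ⟨⟨v, h1, -, h3⟩, ⟨u, g1, -, g3⟩⟩
    exact h ⟨⟨v, h1, h3⟩, ⟨u, g1, g3⟩⟩
  have hext := extend_colouring G L {x} (Finset.mem_singleton_self x) hφ' hc hnF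
  rw [Finset.erase_singleton, Finset.sdiff_empty, induce_self] at hext
  exact hncol ⟨_, hext⟩

/-- Counting consequences of statement (3). -/
lemma nbr_key (G : FDigraph) (L : ℕ → Finset ℕ) (x : ℕ)
    (hlx : max (G.outDeg x) (G.inDeg x) ≤ (L x).card) (φ : ℕ → ℕ)
    (h3 : ∀ c ∈ L x, (∃ v, (x, v) ∈ G.arcs ∧ φ v = c) ∧ (∃ v, (v, x) ∈ G.arcs ∧ φ v = c)) :
    (L x).card = G.outDeg x ∧ (L x).card = G.inDeg x ∧
    (∀ v w, (x, v) ∈ G.arcs → (x, w) ∈ G.arcs → φ v = φ w → v = w) ∧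
    (∀ v w, (v, x) ∈ G.arcs → (w, x) ∈ G.arcs → φ v = φ w → v = w) ∧
    (∀ v, (x, v) ∈ G.arcs → φ v ∈ L x) ∧
    (∀ v, (v, x) ∈ G.arcs → φ v ∈ L x) := by
  classical
  set O := (G.arcs.filter fun a => a.1 = x).image Prod.snd with hO
  set I := (G.arcs.filter fun a => a.2 = x).image Prod.fst with hI
  have hOcard : O.card = G.outDeg x := by
    rw [hO, outDeg]
    apply Finset.card_image_of_injOn
    intro a ha b hb hab
    rw [Finset.mem_coe, Finset.mem_filter] at ha hb
    exact Prod.ext (ha.2.trans hb.2.symm) hab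
  have hIcard : I.card = G.inDeg x := by
    rw [hI, inDeg]
    apply Finset.card_image_of_injOn
    intro a ha b hb hab
    rw [Finset.mem_coe, Finset.mem_filter] at ha hb
    exact Prod.ext hab (ha.2.trans hb.2.symm)
  have hmemO : ∀ v, (x, v) ∈ G.arcs → v ∈ O := by
    intro v hv
    exact Finset.mem_image.mpr ⟨(x, v), Finset.mem_filter.mpr ⟨hv, rfl⟩, rfl⟩
  have hmemI : ∀ v, (v, x) ∈ G.arcs → v ∈ I := by
    intro v hv
    exact Finset.mem_image.mpr ⟨(v, x), Finset.mem_filter.mpr ⟨hv, rfl⟩, rfl⟩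
  have hOsub : L x ⊆ O.image φ := by
    intro c hcL
    obtain ⟨⟨v, hv1, hv2⟩, -⟩ := h3 c hcL
    exact Finset.mem_image.mpr ⟨v, hmemO v hv1, hv2⟩
  have hIsub : L x ⊆ I.image φ := by
    intro c hcL
    obtain ⟨-, ⟨v, hv1, hv2⟩⟩ := h3 c hcL
    exact Finset.mem_image.mpr ⟨v, hmemI v hv1, hv2⟩
  have hOc1 : (L x).card ≤ (O.image φ).card := Finset.card_le_card hOsub
  have hOc2 : (O.image φ).card ≤ O.card := Finset.card_image_le
  have hIc1 : (L x).card ≤ (I.image φ).card := Finset.card_le_card hIsub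
  have hIc2 : (I.image φ).card ≤ I.card := Finset.card_image_le
  have hOeq : (L x).card = G.outDeg x := by
    have := le_trans (le_max_left (G.outDeg x) (G.inDeg x)) hlx
    omega
  have hIeq : (L x).card = G.inDeg x := by
    have := le_trans (le_max_right (G.outDeg x) (G.inDeg x)) hlx
    omega
  have hOimcard : (O.image φ).card = O.card := by omega
  have hIimcard : (I.image φ).card = I.card := by omega
  have hOinj : Set.InjOn φ ↑O := Finset.injOn_of_card_image_eq hOimcard
  have hIinj : Set.InjOn φ ↑I := Finset.injOn_of_card_image_eq hIimcard
  have hOim : O.image φ = L x :=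
    (Finset.eq_of_subset_of_card_le hOsub (by omega)).symm
  have hIim : I.image φ = L x :=
    (Finset.eq_of_subset_of_card_le hIsub (by omega)).symm
  refine ⟨hOeq, hIeq, ?_, ?_, ?_, ?_⟩
  · intro v w hv hw heq
    exact hOinj (Finset.mem_coe.mpr (hmemO v hv)) (Finset.mem_coe.mpr (hmemO w hw)) heq
  · intro v w hv hw heq
    exact hIinj (Finset.mem_coe.mpr (hmemI v hv)) (Finset.mem_coe.mpr (hmemI w hw)) heq
  · intro v hv
    rw [← hOim]
    exact Finset.mem_image_of_mem φ (hmemO v hv)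
  · intro v hv
    rw [← hIim]
    exact Finset.mem_image_of_mem φ (hmemI v hv)

end FDigraph

end Helpers

/-- basic properties of vertices of `X` when `G - X` is
`L`-dicolourable, `G` is not, and `|L(x)| ≥ d_max(x)` on `X`. -/
theorem list_gallai_facts (G : FDigraph) (hGconn : G.Connected)
    (X : Finset ℕ) (hXsub : X ⊆ G.verts) (hXconn : (G.induce X).Connected)
    (L : ℕ → Finset ℕ)
    (hcol : (G.induce (G.verts \ X)).LDicolourable L)
    (hncol : ¬ G.LDicolourable L)
    (hlist : ∀ x ∈ X, max (G.outDeg x) (G.inDeg x) ≤ (L x).card) :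
    ∀ x ∈ X,
      ((L x).card = G.outDeg x ∧ G.outDeg x = G.inDeg x) ∧
      (G.induce (G.verts.erase x)).LDicolourable L ∧
      (∀ φ : ℕ → ℕ, (G.induce (G.verts.erase x)).IsLDicolouring L φ →
        ∀ c ∈ L x, (∃ v, (x, v) ∈ G.arcs ∧ φ v = c) ∧ (∃ v, (v, x) ∈ G.arcs ∧ φ v = c)) ∧
      (∀ φ : ℕ → ℕ, (G.induce (G.verts.erase x)).IsLDicolouring L φ →
        ∀ y ∈ X, G.wadj x y →
          (G.induce (G.verts.erase y)).IsLDicolouring L (Function.update φ x (φ y))) := by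
  intro x hx
  have h2 : (G.induce (G.verts.erase x)).LDicolourable L := by
    rw [Finset.erase_eq]
    exact FDigraph.erase_colourable G X hXsub hXconn L hcol hlist hx
  have h3 := FDigraph.part3 G L hncol x
  obtain ⟨φ₀, hφ₀⟩ := h2
  obtain ⟨e1, e2, -, -, -, -⟩ := FDigraph.nbr_key G L x (hlist x hx) φ₀ (h3 φ₀ hφ₀)
  refine ⟨⟨e1, e1.symm.trans e2⟩, ⟨φ₀, hφ₀⟩, h3, ?_⟩
  intro φ hφ y hy hadj
  obtain ⟨-, -, hOinj, hIinj, hOmem, hImem⟩ :=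
    FDigraph.nbr_key G L x (hlist x hx) φ (h3 φ hφ)
  have hφyL : φ y ∈ L x := by
    rcases hadj with h | h
    · exact hOmem y h
    · exact hImem y h
  constructor
  · intro v hv
    simp only [FDigraph.induce_verts', Finset.mem_inter, Finset.mem_erase] at hv
    by_cases hvx : v = x
    · subst hvx; rw [Function.update_self]; exact hφyL
    · rw [Function.update_of_ne hvx]
      apply hφ.1
      simp only [FDigraph.induce_verts', Finset.mem_inter, Finset.mem_erase]
      exact ⟨hv.1, hvx, hv.1⟩
  · rintro c' ⟨l, hl, hlc⟩
    obtain ⟨hlG, hlS⟩ := FDigraph.dicycle_of_induce hl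
    by_cases hxl : x ∈ l
    · have hc' : c' = φ y := by
        have h := hlc x hxl
        rw [Set.mem_setOf_eq, Function.update_self] at h
        exact h.symm
      obtain ⟨v, hvl, u, hul, hvx, hux, harv, haru⟩ := FDigraph.dicycle_arcs hlG hxl
      have hvy : v ≠ y := by
        have h := hlS v hvl
        rw [Finset.mem_erase] at h
        exact h.1
      have huy : u ≠ y := by
        have h := hlS u hul
        rw [Finset.mem_erase] at h
        exact h.1
      have hφv : φ v = φ y := by
        have h := hlc v hvl
        rw [Set.mem_setOf_eq, Function.update_of_ne hvx] at h
        rw [h, hc']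
      have hφu : φ u = φ y := by
        have h := hlc u hul
        rw [Set.mem_setOf_eq, Function.update_of_ne hux] at h
        rw [h, hc']
      rcases hadj with h | h
      · exact hvy (hOinj v y harv h hφv)
      · exact huy (hIinj u y haru h hφu)
    · apply hφ.2 c'
      refine ⟨l, FDigraph.dicycle_induce hlG ?_, ?_⟩
      · intro v hv
        have h1 := hlS v hv
        rw [Finset.mem_erase] at h1
        exact Finset.mem_erase.mpr ⟨fun h => hxl (h ▸ hv), h1.2⟩
      · intro v hv
        have h := hlc v hv
        rw [Set.mem_setOf_eq, Function.update_of_ne (fun hh : v = x => hxl (hh ▸ hv))] at h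
        exact h
end
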